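/- Let S be a finite type, π : S → ℝ with π(s) > 0 for all s and ∑ π = 1, and let x, y, z, w ∈ S be pairwise distinct. Define the Lake linear functional H₁ on vectors v : (Fin 4 → S) → ℝ by H₁(v) = ṽ(x,y,x,y) + ṽ(x,y,z,w) − ṽ(x,y,z,y) − ṽ(x,y,x,w), where ṽ(χ) = v(χ)/(π(χ 0)π(χ 1)π(χ 2)π(χ 3)). Then H₁(q_σ) = 0 for every set partition σ of Fin 4 with σ ≠ {{0,2},{1,3}}, while H₁(q_{{{0,2},{1,3}}}) = 1/(π(x)π(y)) ≠ 0. In particular H₁ is a linear phylogenetic invariant for the quartet tree 12|34 (it vanishes at q_σ for every σ convex on 12|34) but is not a phylogenetic invariant for the quartet tree 13|24, so H₁ is a linear topology invariant for the equal input model with κ ≥ 4 states. -/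

import Mathlib

/-- The point `q_σ` of the equal input / random cluster model associated with a
set partition `σ` of `Fin n`. -/
noncomputable def qpt {n : ℕ} {S : Type*} [Fintype S] [DecidableEq S] (π : S → ℝ)
    (σ : Finpartition (Finset.univ : Finset (Fin n))) (χ : Fin n → S) : ℝ :=
  if ∀ B ∈ σ.parts, ∀ i ∈ B, ∀ j ∈ B, χ i = χ j then
    ∏ B ∈ σ.parts.attach,
      π (χ ((B : Finset (Fin n)).min' (σ.nonempty_of_mem_parts B.2)))
  else 0

/-- Normalized coordinate of a vector `v : (Fin 4 → S) → ℝ`. -/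
noncomputable def ntilde {S : Type*} (π : S → ℝ) (v : (Fin 4 → S) → ℝ)
    (χ : Fin 4 → S) : ℝ :=
  v χ / (π (χ 0) * π (χ 1) * π (χ 2) * π (χ 3))

/-- The Lake linear functional `H₁` for the quartet tree `12|34`. -/
noncomputable def lakeH1 {S : Type*} (π : S → ℝ) (x y z w : S)
    (v : (Fin 4 → S) → ℝ) : ℝ :=
  ntilde π v ![x, y, x, y] + ntilde π v ![x, y, z, w]
    - ntilde π v ![x, y, z, y] - ntilde π v ![x, y, x, w]

/-!
In the four characters of `lakeH1`, leaves `0` and `1` carry `x` and `y`, leaf `2` carries `x`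
or `z` and leaf `3` carries `y` or `w`. If a block of `σ` meets both `{0, 2}` and `{1, 3}`, then
`q_σ` vanishes at all four characters. If `{2}` (or `{3}`) is a block, the normalized coordinate
of `q_σ` does not depend on the state at that leaf, and the four terms cancel in pairs. The only
partition left is `{{0, 2}, {1, 3}}`, at which only the character `(x, y, x, y)` survives.
-/

open Finset Function

section Qpt

variable {n : ℕ} {S : Type*} [Fintype S] [DecidableEq S] (π : S → ℝ)
  (σ : Finpartition (univ : Finset (Fin n)))

lemma qpt_eq_zero_of_mem_parts {χ : Fin n → S} {B : Finset (Fin n)} (hB : B ∈ σ.parts)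
    {i j : Fin n} (hi : i ∈ B) (hj : j ∈ B) (hχ : χ i ≠ χ j) : qpt π σ χ = 0 :=
  if_neg fun h ↦ hχ (h B hB i hi j hj)

lemma qpt_eq_prod {χ : Fin n → S} (c : Finset (Fin n) → S)
    (hc : ∀ B ∈ σ.parts, ∀ i ∈ B, χ i = c B) : qpt π σ χ = ∏ B ∈ σ.parts, π (c B) := by
  rw [qpt, if_pos fun B hB i hi j hj ↦ (hc B hB i hi).trans (hc B hB j hj).symm,
    ← prod_attach σ.parts]
  exact prod_congr rfl fun B _ ↦ congrArg π (hc B B.2 _ (min'_mem _ _))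

lemma qpt_update_mul_of_singleton_mem {i : Fin n} (hi : {i} ∈ σ.parts) (χ : Fin n → S) (a : S) :
    qpt π σ (update χ i a) * π (χ i) = qpt π σ χ * π a := by
  have update_eqOn : ∀ B ∈ σ.parts, B ≠ {i} → ∀ j ∈ B, update χ i a j = χ j :=
    fun B hB hne j hj ↦ update_of_ne (fun hji ↦ hne (σ.eq_of_mem_parts hB hi (hji ▸ hj)
      (mem_singleton_self i))) _ _
  have const_iff : (∀ B ∈ σ.parts, ∀ j ∈ B, ∀ k ∈ B, update χ i a j = update χ i a k) ↔
      (∀ B ∈ σ.parts, ∀ j ∈ B, ∀ k ∈ B, χ j = χ k) := by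
    refine forall₂_congr fun B hB ↦ ?_
    by_cases hBi : B = {i}
    · simp [hBi]
    · simp +contextual only [update_eqOn B hB hBi]
  by_cases hconst : ∀ B ∈ σ.parts, ∀ j ∈ B, ∀ k ∈ B, χ j = χ k
  · rw [qpt, qpt, if_pos (const_iff.2 hconst), if_pos hconst,
      ← mul_prod_erase _ _ (mem_attach _ ⟨{i}, hi⟩),
      ← mul_prod_erase _ _ (mem_attach _ ⟨{i}, hi⟩),
      prod_congr rfl fun (B : σ.parts) hB ↦ congrArg π
        (update_eqOn B B.2 (fun h ↦ ne_of_mem_erase hB (Subtype.ext h)) _ (min'_mem _ _))]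
    simp only [min'_singleton, update_self]
    ring
  · rw [qpt, qpt, if_neg (mt const_iff.1 hconst), if_neg hconst, zero_mul, zero_mul]

end Qpt

lemma ntilde_update_eq {S : Type*} {π : S → ℝ} (hπ : ∀ s, π s ≠ 0)
    {v : (Fin 4 → S) → ℝ} {χ : Fin 4 → S} {i : Fin 4} {a : S}
    (hv : v (update χ i a) * π (χ i) = v χ * π a) :
    ntilde π v (update χ i a) = ntilde π v χ := by
  have hden : π (update χ i a 0) * π (update χ i a 1) * π (update χ i a 2) * π (update χ i a 3) *
      π (χ i) = π (χ 0) * π (χ 1) * π (χ 2) * π (χ 3) * π a := by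
    fin_cases i <;> simp <;> ring
  rw [ntilde, ntilde, ← mul_div_mul_right _ _ (hπ (χ i)), hv, hden, mul_div_mul_right _ _ (hπ a)]

section LakeH1

variable {S : Type*} {π : S → ℝ} {v : (Fin 4 → S) → ℝ} {x y z w : S}

lemma lakeH1_eq_zero_of_ntilde_update_two_eq
    (hv : ∀ χ a, ntilde π v (update χ 2 a) = ntilde π v χ) : lakeH1 π x y z w v = 0 := by
  have h₁ : ![x, y, z, y] = update ![x, y, x, y] 2 z := by ext j; fin_cases j <;> rfl
  have h₂ : ![x, y, z, w] = update ![x, y, x, w] 2 z := by ext j; fin_cases j <;> rfl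
  rw [lakeH1, h₁, h₂, hv, hv]
  ring

lemma lakeH1_eq_zero_of_ntilde_update_three_eq
    (hv : ∀ χ a, ntilde π v (update χ 3 a) = ntilde π v χ) : lakeH1 π x y z w v = 0 := by
  have h₁ : ![x, y, x, w] = update ![x, y, x, y] 3 w := by ext j; fin_cases j <;> rfl
  have h₂ : ![x, y, z, w] = update ![x, y, z, y] 3 w := by ext j; fin_cases j <;> rfl
  rw [lakeH1, h₁, h₂, hv, hv]
  ring

lemma lakeH1_eq_zero_of_eq_zero_of_ne {i j : Fin 4} (hi : i ∈ ({0, 2} : Finset (Fin 4)))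
    (hj : j ∈ ({1, 3} : Finset (Fin 4))) (hxy : x ≠ y) (hxw : x ≠ w) (hyz : y ≠ z) (hzw : z ≠ w)
    (hv : ∀ χ, χ i ≠ χ j → v χ = 0) : lakeH1 π x y z w v = 0 := by
  simp only [mem_insert, mem_singleton] at hi hj
  have hv' : ∀ χ, χ i ≠ χ j → ntilde π v χ = 0 := fun χ h ↦ by rw [ntilde, hv χ h, zero_div]
  rw [lakeH1, hv', hv', hv', hv'] <;>
    rcases hi with rfl | rfl <;> rcases hj with rfl | rfl <;> simp [*, Ne.symm hyz]

end LakeH1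

lemma Finset.eq_singleton_or_eq_pair_of_subset_pair {α : Type*} [DecidableEq α] {s : Finset α}
    {a b : α} (hs : s ⊆ {a, b}) (hb : b ∈ s) : s = {b} ∨ s = {a, b} := by
  by_cases ha : a ∈ s
  · exact .inr (hs.antisymm (insert_subset ha (singleton_subset_iff.2 hb)))
  · refine .inl (eq_singleton_iff_unique_mem.2 ⟨hb, fun c hc ↦ ?_⟩)
    simpa [ne_of_mem_of_not_mem hc ha] using hs hc

lemma Finpartition.fin_four_cases (σ : Finpartition (univ : Finset (Fin 4))) :
    {2} ∈ σ.parts ∨ {3} ∈ σ.parts ∨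
      σ.parts = ({({0, 2} : Finset (Fin 4)), ({1, 3} : Finset (Fin 4))} :
        Finset (Finset (Fin 4))) ∨
      ∃ B ∈ σ.parts, ∃ i ∈ B, ∃ j ∈ B,
        i ∈ ({0, 2} : Finset (Fin 4)) ∧ j ∈ ({1, 3} : Finset (Fin 4)) := by
  by_cases hmix : ∃ B ∈ σ.parts, ∃ i ∈ B, ∃ j ∈ B,
      i ∈ ({0, 2} : Finset (Fin 4)) ∧ j ∈ ({1, 3} : Finset (Fin 4))
  · exact .inr <| .inr <| .inr hmix
  push Not at hmix
  have part_mem (i : Fin 4) : σ.part i ∈ σ.parts := σ.part_mem.2 (mem_univ i)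
  have mem_part (i : Fin 4) : i ∈ σ.part i := σ.mem_part (mem_univ i)
  have part_two_sub : σ.part 2 ⊆ {0, 2} := fun j hj ↦ by
    have := hmix _ (part_mem 2) 2 (mem_part 2) j hj (by decide)
    revert this; fin_cases j <;> decide
  have part_three_sub : σ.part 3 ⊆ {1, 3} := fun j hj ↦ by
    by_contra hj'
    refine hmix _ (part_mem 3) j hj 3 (mem_part 3) ?_ (by decide)
    revert hj'; fin_cases j <;> decide
  rcases eq_singleton_or_eq_pair_of_subset_pair part_two_sub (mem_part 2) with h2 | h2
  · exact .inl (h2 ▸ part_mem 2)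
  rcases eq_singleton_or_eq_pair_of_subset_pair part_three_sub (mem_part 3) with h3 | h3
  · exact .inr <| .inl (h3 ▸ part_mem 3)
  refine .inr <| .inr <| .inl ?_
  rw [← h2, ← h3]
  ext B
  simp only [mem_insert, mem_singleton]
  refine ⟨fun hB ↦ ?_, by rintro (rfl | rfl) <;> exact part_mem _⟩
  obtain ⟨i, hi⟩ := σ.nonempty_of_mem_parts hB
  have : i ∈ σ.part 2 ∨ i ∈ σ.part 3 := by rw [h2, h3]; fin_cases i <;> decide
  exact this.imp (σ.eq_of_mem_parts hB (part_mem 2) hi) (σ.eq_of_mem_parts hB (part_mem 3) hi)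

lemma lakeH1_qpt_eq_of_parts_eq {S : Type*} [Fintype S] [DecidableEq S] {π : S → ℝ}
    (hπ : ∀ s, π s ≠ 0) {x y z w : S} (hxz : x ≠ z) (hyw : y ≠ w)
    (σ : Finpartition (univ : Finset (Fin 4)))
    (hσ : σ.parts = ({({0, 2} : Finset (Fin 4)), ({1, 3} : Finset (Fin 4))} :
      Finset (Finset (Fin 4)))) :
    lakeH1 π x y z w (qpt π σ) = 1 / (π x * π y) := by
  have on_parts : qpt π σ ![x, y, x, y] = π x * π y := by
    rw [qpt_eq_prod π σ (fun B ↦ if 0 ∈ B then x else y), hσ, prod_pair (by decide)]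
    · simp
    rw [hσ]
    intro B hB i hi
    simp only [mem_insert, mem_singleton] at hB
    rcases hB with rfl | rfl <;> fin_cases i <;> simp_all
  have off_part_02 (a b : S) (ha : a ≠ x) : qpt π σ ![x, y, a, b] = 0 :=
    qpt_eq_zero_of_mem_parts π σ (B := {0, 2}) (by simp [hσ]) (i := 0) (j := 2) (by simp)
      (by simp) ha.symm
  have off_part_13 (a b : S) (hb : b ≠ y) : qpt π σ ![x, y, a, b] = 0 :=
    qpt_eq_zero_of_mem_parts π σ (B := {1, 3}) (by simp [hσ]) (i := 1) (j := 3) (by simp)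
      (by simp) hb.symm
  rw [lakeH1, ntilde, ntilde, ntilde, ntilde, on_parts, off_part_02 _ _ hxz.symm,
    off_part_02 _ _ hxz.symm, off_part_13 _ _ hyw.symm]
  simp only [Matrix.cons_val, zero_div, add_zero, sub_zero]
  field_simp [hπ]

theorem ei_lake_topology_invariant_general {S : Type*} [Fintype S] [DecidableEq S]
    (π : S → ℝ) (hpos : ∀ s, 0 < π s)
    (x y z w : S)
    (hd : x ≠ y ∧ x ≠ z ∧ x ≠ w ∧ y ≠ z ∧ y ≠ w ∧ z ≠ w) :
    (∀ σ : Finpartition (Finset.univ : Finset (Fin 4)),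
      σ.parts ≠ ({({0, 2} : Finset (Fin 4)), ({1, 3} : Finset (Fin 4))} :
        Finset (Finset (Fin 4))) →
      lakeH1 π x y z w (qpt π σ) = 0) ∧
    (∀ σ : Finpartition (Finset.univ : Finset (Fin 4)),
      σ.parts = ({({0, 2} : Finset (Fin 4)), ({1, 3} : Finset (Fin 4))} :
        Finset (Finset (Fin 4))) →
      lakeH1 π x y z w (qpt π σ) = 1 / (π x * π y)) ∧
    1 / (π x * π y) ≠ 0 := by
  obtain ⟨hxy, hxz, hxw, hyz, hyw, hzw⟩ := hd
  have hπ : ∀ s, π s ≠ 0 := fun s ↦ (hpos s).ne'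
  refine ⟨fun σ hσ ↦ ?_, lakeH1_qpt_eq_of_parts_eq hπ hxz hyw,
    one_div_ne_zero (mul_ne_zero (hπ x) (hπ y))⟩
  rcases σ.fin_four_cases with h2 | h3 | h | ⟨B, hB, i, hi, j, hj, hi', hj'⟩
  · exact lakeH1_eq_zero_of_ntilde_update_two_eq fun χ a ↦
      ntilde_update_eq hπ (qpt_update_mul_of_singleton_mem π σ h2 χ a)
  · exact lakeH1_eq_zero_of_ntilde_update_three_eq fun χ a ↦
      ntilde_update_eq hπ (qpt_update_mul_of_singleton_mem π σ h3 χ a)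
  · exact absurd h hσ
  · exact lakeH1_eq_zero_of_eq_zero_of_ne hi' hj' hxy hxw hyz hzw fun χ ↦
      qpt_eq_zero_of_mem_parts π σ hB hi hj

/-- the Lake functional `H₁` vanishes at `q_σ` for every set
partition `σ` of `Fin 4` other than `{{0,2},{1,3}}`, and takes the nonzero value
`1/(π x * π y)` on `q_{{{0,2},{1,3}}}`; hence it is a linear phylogenetic
invariant for the quartet tree `12|34` but not for `13|24`, i.e. a linear
topology invariant for the equal input model with at least 4 states. -/
theorem ei_lake_topology_invariant {S : Type*} [Fintype S] [DecidableEq S]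
    (π : S → ℝ) (hpos : ∀ s, 0 < π s) (hsum : ∑ s, π s = 1)
    (x y z w : S)
    (hd : x ≠ y ∧ x ≠ z ∧ x ≠ w ∧ y ≠ z ∧ y ≠ w ∧ z ≠ w) :
    (∀ σ : Finpartition (Finset.univ : Finset (Fin 4)),
      σ.parts ≠ ({({0, 2} : Finset (Fin 4)), ({1, 3} : Finset (Fin 4))} :
        Finset (Finset (Fin 4))) →
      lakeH1 π x y z w (qpt π σ) = 0) ∧
    (∀ σ : Finpartition (Finset.univ : Finset (Fin 4)),
      σ.parts = ({({0, 2} : Finset (Fin 4)), ({1, 3} : Finset (Fin 4))} :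
        Finset (Finset (Fin 4))) →
      lakeH1 π x y z w (qpt π σ) = 1 / (π x * π y)) ∧
    1 / (π x * π y) ≠ 0 :=
  ei_lake_topology_invariant_general π hpos x y z w hd
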